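/- Let d₀ be the diameter of D in the metric g. There exists a constant K₁ > 0, independent of (x,ξ) ∈ D × G and t ∈ [0,d₀], such that for every 2 ≤ k ≤ n, |ξ|_g |ż^k(x, ξ/|ξ|_g, t)| ≤ K₁ for all x ∈ D, ξ ∈ G and t ∈ [0,d₀], where |ξ|_g = (Σ_{i,j=1}^n g_{ij}(x) ξ^i ξ^j)^{1/2}. -/

import Mathlib

open MeasureTheory Real Topology Filter Set

noncomputable section

/-- Partial derivative of `f` in the coordinate direction `j` (line derivative). -/
noncomputable def pd {ι : Type} [Fintype ι] [DecidableEq ι]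
    {F : Type} [NormedAddCommGroup F] [NormedSpace ℝ F]
    (j : ι) (f : (ι → ℝ) → F) (x : ι → ℝ) : F :=
  lineDeriv ℝ f x (Pi.single j 1)

/-- Iterated partial derivatives along a list of coordinate directions; the list encodes
a multi-index `β`, with `|β| = l.length`. -/
noncomputable def pdList {ι : Type} [Fintype ι] [DecidableEq ι]
    {F : Type} [NormedAddCommGroup F] [NormedSpace ℝ F] :
    List ι → ((ι → ℝ) → F) → (ι → ℝ) → F
  | [], f => f
  | j :: l, f => pd j (pdList l f)

/-- Existence of all the iterated partial derivatives encoded by the list `l`,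
at every point of `s`. -/
def PdListDiffOn {ι : Type} [Fintype ι] [DecidableEq ι]
    {F : Type} [NormedAddCommGroup F] [NormedSpace ℝ F] :
    List ι → ((ι → ℝ) → F) → Set (ι → ℝ) → Prop
  | [], _, _ => True
  | j :: l, f, s => PdListDiffOn l f s ∧
      ∀ x ∈ s, LineDifferentiableAt ℝ (pdList l f) x (Pi.single j 1)

/-- The Christoffel symbols `Γ^s_{jk}` of the metric `g`. -/
noncomputable def christoffel {n : ℕ} (g : (Fin n → ℝ) → Matrix (Fin n) (Fin n) ℝ)
    (s j k : Fin n) (x : Fin n → ℝ) : ℝ :=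
  (1 / 2) * ∑ l, (g x)⁻¹ s l *
    (pd j (fun y => g y k l) x + pd k (fun y => g y j l) x - pd l (fun y => g y j k) x)

/-- `w` is a geodesic of `g`: a `C²` curve satisfying the geodesic equations. -/
def IsGeodesic {n : ℕ} (g : (Fin n → ℝ) → Matrix (Fin n) (Fin n) ℝ)
    (w : ℝ → Fin n → ℝ) : Prop :=
  (∀ i, ContDiff ℝ 2 fun t => w t i) ∧
  ∀ (t : ℝ) (i : Fin n), deriv (deriv fun s => w s i) t =
    - ∑ j, ∑ k, christoffel g i j k (w t) * deriv (fun s => w s j) t * deriv (fun s => w s k) t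

/-- `z x ξ` is, for every `x` and `ξ ≠ 0`, the unique geodesic of `g` with initial
position `x` and initial velocity `ξ`. -/
def IsGeodesicFlow {n : ℕ} (g : (Fin n → ℝ) → Matrix (Fin n) (Fin n) ℝ)
    (z : (Fin n → ℝ) → (Fin n → ℝ) → ℝ → Fin n → ℝ) : Prop :=
  ∀ x ξ, ξ ≠ (0 : Fin n → ℝ) →
    (IsGeodesic g (z x ξ) ∧ z x ξ 0 = x ∧ ∀ i, deriv (fun t => z x ξ t i) 0 = ξ i) ∧
    ∀ w : ℝ → Fin n → ℝ, IsGeodesic g w → w 0 = x →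
      (∀ i, deriv (fun t => w t i) 0 = ξ i) → w = z x ξ

/-- `ż^i(x,ξ,t)`, the `i`-th component of the velocity of the geodesic `z x ξ`. -/
noncomputable def zdot {n : ℕ} (z : (Fin n → ℝ) → (Fin n → ℝ) → ℝ → Fin n → ℝ)
    (x ξ : Fin n → ℝ) (t : ℝ) (i : Fin n) : ℝ :=
  deriv (fun s => z x ξ s i) t

/-- `γ` is a unit-speed (in the metric `g`) geodesic from `x` to `y`, defined on `[0,T]`
and lying in `D`. -/
def UnitSpeedGeodesicIn {n : ℕ} (g : (Fin n → ℝ) → Matrix (Fin n) (Fin n) ℝ)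
    (D : Set (Fin n → ℝ)) (x y : Fin n → ℝ) (γ : ℝ → Fin n → ℝ) (T : ℝ) : Prop :=
  0 ≤ T ∧ IsGeodesic g γ ∧ γ 0 = x ∧ γ T = y ∧ (∀ t ∈ Set.Icc 0 T, γ t ∈ D) ∧
  ∀ t ∈ Set.Icc 0 T,
    ∑ i, ∑ j, g (γ t) i j * deriv (fun s => γ s i) t * deriv (fun s => γ s j) t = 1

/-- `D` is strongly convex with respect to `g`: any two points of `D` are joined by a
unique (unit-speed) geodesic of `g` which lies in `D`. -/
def StronglyConvexIn {n : ℕ} (g : (Fin n → ℝ) → Matrix (Fin n) (Fin n) ℝ)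
    (D : Set (Fin n → ℝ)) : Prop :=
  ∀ x ∈ D, ∀ y ∈ D,
    (∃ γ T, UnitSpeedGeodesicIn g D x y γ T) ∧
    ∀ γ T γ' T', UnitSpeedGeodesicIn g D x y γ T → UnitSpeedGeodesicIn g D x y γ' T' →
      T = T' ∧ ∀ t ∈ Set.Icc 0 T, γ t = γ' t

/-- The function `u(x,ξ) = Σ_{i,j=2}^n ∫₀^∞ a_{ij}(z(x,ξ,t)) ż^i(x,ξ,t) ż^j(x,ξ,t) dt`. -/
noncomputable def uFun {n : ℕ} [NeZero n] (a : Fin n → Fin n → (Fin n → ℝ) → ℝ)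
    (z : (Fin n → ℝ) → (Fin n → ℝ) → ℝ → Fin n → ℝ) (x ξ : Fin n → ℝ) : ℝ :=
  ∑ i ∈ Finset.univ.filter fun i : Fin n => i ≠ 0,
    ∑ j ∈ Finset.univ.filter fun j : Fin n => j ≠ 0,
      ∫ t in Set.Ioi (0 : ℝ), a i j (z x ξ t) * zdot z x ξ t i * zdot z x ξ t j

/-- `I_{ij}(x,ξ) = ∫₀^∞ b(z(x,ξ,t)) ż^i(x,ξ,t) ż^j(x,ξ,t) dt`. -/
noncomputable def Ifun {n : ℕ} (b : (Fin n → ℝ) → ℝ)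
    (z : (Fin n → ℝ) → (Fin n → ℝ) → ℝ → Fin n → ℝ) (i j : Fin n) (x ξ : Fin n → ℝ) : ℝ :=
  ∫ t in Set.Ioi (0 : ℝ), b (z x ξ t) * zdot z x ξ t i * zdot z x ξ t j

/-- Builds the vector `ξ = (ξ¹, ξ′)` from `ξ¹ = s` and `ξ′`. -/
def extv {n : ℕ} [NeZero n] (s : ℝ) (ξ' : {i : Fin n // i ≠ 0} → ℝ) : Fin n → ℝ :=
  fun i => if h : i = 0 then s else ξ' ⟨i, h⟩

/-- The truncation `ξ′ = (ξ², …, ξⁿ)` of `ξ`. -/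
def restr {n : ℕ} [NeZero n] (ξ : Fin n → ℝ) : {i : Fin n // i ≠ 0} → ℝ :=
  fun i => ξ (i : Fin n)

/-- The (generalized) Fourier transform of `w(x, ·, ξ′)` in the variable `ξ¹`. -/
noncomputable def fourier1 {n : ℕ} [NeZero n] (w : (Fin n → ℝ) → (Fin n → ℝ) → ℝ)
    (x : Fin n → ℝ) (η : ℝ) (ξ' : {i : Fin n // i ≠ 0} → ℝ) : ℂ :=
  ∫ s : ℝ, (w x (extv s ξ') : ℂ) * Complex.exp (-(Complex.I * (s : ℂ) * (η : ℂ)))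

/-- `|ξ|_g = (Σ_{i,j} g_{ij}(x) ξ^i ξ^j)^{1/2}`. -/
noncomputable def normg {n : ℕ} (g : (Fin n → ℝ) → Matrix (Fin n) (Fin n) ℝ)
    (x ξ : Fin n → ℝ) : ℝ :=
  Real.sqrt (∑ i, ∑ j, g x i j * ξ i * ξ j)

/-- The Euclidean norm of `ξ ∈ ℝⁿ`. -/
noncomputable def eunorm {n : ℕ} (ξ : Fin n → ℝ) : ℝ := Real.sqrt (∑ i, ξ i ^ 2)

/-- The Euclidean norm of `ξ′ = (ξ²,…,ξⁿ)`. -/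
noncomputable def eunorm' {n : ℕ} [NeZero n] (ξ' : {i : Fin n // i ≠ 0} → ℝ) : ℝ :=
  Real.sqrt (∑ i, ξ' i ^ 2)

/-- The open half-line `Δ_η^ρ = {η : ρ η > 0}`. -/
def deltaSet (ρ : ℝ) : Set ℝ := {η : ℝ | 0 < ρ * η}

/-- The closed half-line `Δ̄_η^ρ = {η : ρ η ≥ 0}`. -/
def deltaSetCl (ρ : ℝ) : Set ℝ := {η : ℝ | 0 ≤ ρ * η}

/-!
Along a geodesic the energy `g(ż, ż)` is conserved, so for unit initial speed the whole
velocity stays bounded, uniformly in the initial point because `g` is Euclidean outside a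
compact set. In semi-geodesic coordinates `Γ^k_{11} = 0` (the paper's index `1` is `0 : Fin n`),
so every term of the geodesic equation contains a transverse component `ż^p`, `p ≥ 2`. Hence the
transverse velocity `ż′` satisfies `|dż′/dt| ≤ K |ż′|`, and Gronwall gives
`|ż′(t)| ≤ |ż′(0)| e^{Kt}`. For the initial velocity `ξ/|ξ|_g` one has `|ξ|_g |ż′(0)| = |ξ′|`,
which is bounded on `G′`.
-/

section PartialDerivatives

variable {ι : Type} [Fintype ι] [DecidableEq ι]

theorem pd_eq_fderiv {f : (ι → ℝ) → ℝ} {x : ι → ℝ} (j : ι) (hf : DifferentiableAt ℝ f x) :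
    pd j f x = fderiv ℝ f x (Pi.single j 1) :=
  hf.lineDeriv_eq_fderiv

theorem pd_eq_zero_of_eventuallyEq_const {f : (ι → ℝ) → ℝ} {x : ι → ℝ} {c : ℝ} (j : ι)
    (hf : f =ᶠ[𝓝 x] fun _ => c) : pd j f x = 0 := by
  rw [pd_eq_fderiv j ((differentiableAt_const c).congr_of_eventuallyEq hf), hf.fderiv_eq,
    fderiv_const_apply]
  rfl

theorem continuous_pd {f : (ι → ℝ) → ℝ} (j : ι) (hf : ContDiff ℝ 1 f) : Continuous (pd j f) := by
  have hdiff := hf.differentiable one_ne_zero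
  simpa only [funext fun x => pd_eq_fderiv j (hdiff x)] using
    (hf.continuous_fderiv one_ne_zero).clm_apply continuous_const

theorem fderiv_apply_eq_sum_pd {f : (ι → ℝ) → ℝ} {x : ι → ℝ} (hf : DifferentiableAt ℝ f x)
    (v : ι → ℝ) : fderiv ℝ f x v = ∑ k, v k * pd k f x := by
  conv_lhs => rw [pi_eq_sum_univ' v]
  simp only [map_sum, map_smul, smul_eq_mul, pd_eq_fderiv _ hf]

theorem HasDerivAt.comp_sum_pd {f : (ι → ℝ) → ℝ} {w : ℝ → ι → ℝ} {u : ι → ℝ} {t : ℝ}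
    (hw : HasDerivAt w u t) (hf : DifferentiableAt ℝ f (w t)) :
    HasDerivAt (fun s => f (w s)) (∑ k, u k * pd k f (w t)) t := by
  have h := hf.hasFDerivAt.comp_hasDerivAt t hw
  rw [fderiv_apply_eq_sum_pd hf] at h
  exact h

end PartialDerivatives

section Christoffel

variable {n : ℕ} {g : (Fin n → ℝ) → Matrix (Fin n) (Fin n) ℝ}

theorem continuous_christoffel (hg : ∀ i j, ContDiff ℝ 1 fun x => g x i j)
    (hdet : ∀ x, IsUnit (g x).det) (s j k : Fin n) : Continuous (christoffel g s j k) := by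
  have hcont : Continuous g := continuous_pi fun i => continuous_pi fun j => (hg i j).continuous
  have hinv : Continuous fun x => (g x)⁻¹ := continuous_iff_continuousAt.2 fun x =>
    (continuousAt_matrix_inv _ (NormedRing.inverse_continuousAt (hdet x).unit)).comp
      hcont.continuousAt
  have hpd : ∀ p q r, Continuous (pd p fun y => g y q r) := fun p q r => continuous_pd p (hg q r)
  unfold christoffel
  fun_prop (disch := first | exact hpd _ _ _ | exact hinv.matrix_elem _ _)

theorem christoffel_eq_zero_of_eventuallyEq_const {x : Fin n → ℝ} {A : Matrix (Fin n) (Fin n) ℝ}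
    (hg : g =ᶠ[𝓝 x] fun _ => A) (s j k : Fin n) : christoffel g s j k x = 0 := by
  have hpd : ∀ p q r, pd p (fun y => g y q r) x = 0 := fun p q r =>
    pd_eq_zero_of_eventuallyEq_const (c := A q r) p (hg.mono fun y hy => by simp only [hy])
  simp [christoffel, hpd]

theorem christoffel_self_eq_zero_of_row_const {i : Fin n} (hrow : ∀ y, g y i = g 0 i)
    (k : Fin n) (x : Fin n → ℝ) : christoffel g k i i x = 0 := by
  have hpd : ∀ p l, pd p (fun y => g y i l) x = 0 := fun p l =>
    pd_eq_zero_of_eventuallyEq_const p (Eventually.of_forall fun y => congrFun (hrow y) l)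
  simp [christoffel, hpd]

theorem christoffel_zero_zero_of_semigeodesic [NeZero n]
    (hsemi : ∀ x, g x 0 0 = 1 ∧ ∀ i, i ≠ 0 → g x 0 i = 0) (k : Fin n) (x : Fin n → ℝ) :
    christoffel g k 0 0 x = 0 :=
  christoffel_self_eq_zero_of_row_const (fun y => funext fun l => by
    by_cases hl : l = 0
    · rw [hl, (hsemi y).1, (hsemi 0).1]
    · rw [(hsemi y).2 l hl, (hsemi 0).2 l hl]) k x

theorem exists_abs_christoffel_le (hg : ∀ i j, ContDiff ℝ 1 fun x => g x i j)
    (hdet : ∀ x, IsUnit (g x).det) {K : Set (Fin n → ℝ)} (hK : IsCompact K)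
    (hgK : ∀ x ∉ K, g x = 1) : ∃ C, ∀ s j k x, |christoffel g s j k x| ≤ C := by
  set Γ : (Fin n → ℝ) → Fin n × Fin n × Fin n → ℝ := fun x p => christoffel g p.1 p.2.1 p.2.2 x
  have hΓ : Continuous Γ := continuous_pi fun p => continuous_christoffel hg hdet _ _ _
  have hsupp : HasCompactSupport Γ := HasCompactSupport.intro hK fun x hx => by
    have hev : g =ᶠ[𝓝 x] fun _ => 1 :=
      Filter.eventually_of_mem (hK.isClosed.isOpen_compl.mem_nhds hx) hgK
    exact funext fun p => christoffel_eq_zero_of_eventuallyEq_const hev _ _ _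
  obtain ⟨C, hC⟩ := hΓ.bounded_above_of_compact_support hsupp
  exact ⟨C, fun s j k x => (norm_le_pi_norm (Γ x) (s, j, k)).trans (hC x)⟩

end Christoffel

section MetricNorm

open Matrix

variable {n : ℕ} {g : (Fin n → ℝ) → Matrix (Fin n) (Fin n) ℝ}

theorem norm_le_eunorm (v : Fin n → ℝ) : ‖v‖ ≤ eunorm v :=
  (pi_norm_le_iff_of_nonneg (Real.sqrt_nonneg _)).2 fun i =>
    Real.abs_le_sqrt (Finset.single_le_sum (f := fun j => v j ^ 2)
      (fun _ _ => sq_nonneg _) (Finset.mem_univ i))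

theorem sum_sum_mul_mul_eq_dotProduct_mulVec (A : Matrix (Fin n) (Fin n) ℝ) (v : Fin n → ℝ) :
    ∑ i, ∑ j, A i j * v i * v j = v ⬝ᵥ (A *ᵥ v) := by
  simp only [dotProduct, mulVec, Finset.mul_sum]
  exact Finset.sum_congr rfl fun i _ => Finset.sum_congr rfl fun j _ => by ring

theorem sq_normg {x : Fin n → ℝ} (hpos : (g x).PosDef) (v : Fin n → ℝ) :
    normg g x v ^ 2 = v ⬝ᵥ (g x *ᵥ v) := by
  have h := hpos.posSemidef.dotProduct_mulVec_nonneg v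
  rw [star_trivial] at h
  rw [normg, sum_sum_mul_mul_eq_dotProduct_mulVec, Real.sq_sqrt h]

theorem normg_pos {x v : Fin n → ℝ} (hpos : (g x).PosDef) (hv : v ≠ 0) : 0 < normg g x v := by
  have h := hpos.dotProduct_mulVec_pos hv
  rw [star_trivial] at h
  rw [normg, sum_sum_mul_mul_eq_dotProduct_mulVec]
  exact Real.sqrt_pos.2 h

theorem normg_smul (x : Fin n → ℝ) (a : ℝ) (v : Fin n → ℝ) :
    normg g x (a • v) = |a| * normg g x v := by
  have h : ∑ i, ∑ j, g x i j * (a • v) i * (a • v) j = a ^ 2 * ∑ i, ∑ j, g x i j * v i * v j := by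
    simp only [Pi.smul_apply, smul_eq_mul, Finset.mul_sum]
    exact Finset.sum_congr rfl fun i _ => Finset.sum_congr rfl fun _ _ => by ring
  rw [normg, normg, h, Real.sqrt_mul (sq_nonneg a), Real.sqrt_sq_eq_abs]

theorem exists_norm_le_mul_normg (hg : Continuous g) (hpos : ∀ x, (g x).PosDef)
    {K : Set (Fin n → ℝ)} (hK : IsCompact K) (hgK : ∀ x ∉ K, g x = 1) :
    ∃ c > 0, ∀ x v, ‖v‖ ≤ c * normg g x v := by
  set Q : (Fin n → ℝ) × (Fin n → ℝ) → ℝ := fun p => p.2 ⬝ᵥ (g p.1 *ᵥ p.2)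
  have hQ : Continuous Q :=
    continuous_snd.dotProduct ((hg.comp continuous_fst).matrix_mulVec continuous_snd)
  obtain ⟨m, hm0, hm⟩ := (hK.prod (isCompact_sphere 0 1)).exists_forall_le' hQ.continuousOn
    fun p hp => by
      have hp0 : p.2 ≠ 0 := ne_zero_of_mem_unit_sphere (⟨p.2, hp.2⟩ : Metric.sphere _ 1)
      simpa only [Q, star_trivial] using (hpos p.1).dotProduct_mulVec_pos hp0
  have hmin : 0 < min m 1 := lt_min hm0 one_pos
  refine ⟨(√(min m 1))⁻¹, by positivity, fun x v => ?_⟩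
  suffices h : min m 1 * ‖v‖ ^ 2 ≤ normg g x v ^ 2 by
    have hg0 : 0 ≤ normg g x v := Real.sqrt_nonneg _
    rw [inv_mul_eq_div, le_div_iff₀ (by positivity), mul_comm, ← Real.sqrt_sq (norm_nonneg v),
      ← Real.sqrt_mul hmin.le, ← Real.sqrt_sq hg0]
    exact Real.sqrt_le_sqrt h
  rw [sq_normg (hpos x)]
  by_cases hx : x ∈ K
  · rcases eq_or_ne v 0 with rfl | hv
    · simp
    have hsphere := hm (x, ‖v‖⁻¹ • v) ⟨hx, by simp [norm_smul, norm_ne_zero_iff.2 hv]⟩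
    have hhom : Q (x, ‖v‖⁻¹ • v) * ‖v‖ ^ 2 = v ⬝ᵥ (g x *ᵥ v) := by
      simp only [Q, mulVec_smul, smul_dotProduct, dotProduct_smul, smul_eq_mul]
      field_simp
    calc min m 1 * ‖v‖ ^ 2 ≤ m * ‖v‖ ^ 2 := by gcongr; exact min_le_left _ _
      _ ≤ Q (x, ‖v‖⁻¹ • v) * ‖v‖ ^ 2 := by gcongr
      _ = v ⬝ᵥ (g x *ᵥ v) := hhom
  · have hv : ‖v‖ ^ 2 ≤ v ⬝ᵥ v := by
      calc ‖v‖ ^ 2 ≤ eunorm v ^ 2 := by gcongr; exact norm_le_eunorm v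
        _ = v ⬝ᵥ v := by
          rw [eunorm, Real.sq_sqrt (by positivity)]
          simp only [dotProduct, sq]
    rw [hgK x hx, one_mulVec]
    nlinarith [min_le_right m 1, sq_nonneg ‖v‖]

end MetricNorm

section Energy

open Matrix

variable {n : ℕ} {g : (Fin n → ℝ) → Matrix (Fin n) (Fin n) ℝ}

theorem sum_mul_christoffel {y : Fin n → ℝ} (hdet : IsUnit (g y).det) (i p q : Fin n) :
    ∑ s, g y i s * christoffel g s p q y = (1 / 2) * (pd p (fun x => g x q i) y
      + pd q (fun x => g x p i) y - pd i (fun x => g x p q) y) := by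
  set c : Fin n → ℝ := fun l =>
    pd p (fun x => g x q l) y + pd q (fun x => g x p l) y - pd l (fun x => g x p q) y
  have hΓ : (fun s => christoffel g s p q y) = (1 / 2 : ℝ) • ((g y)⁻¹ *ᵥ c) := by
    funext s
    simp only [christoffel, Pi.smul_apply, smul_eq_mul, mulVec, dotProduct, c]
  have h := congrFun (congrArg (g y *ᵥ ·) hΓ) i
  simp only [mulVec_smul, mulVec_mulVec, mul_nonsing_inv _ hdet, one_mulVec] at h
  exact h

/-- `⟨v, Γ(v, v)⟩_g = ½ (∂_v g)(v, v)`. -/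
theorem sum_sum_mul_christoffel_contract {y : Fin n → ℝ} (hdet : IsUnit (g y).det)
    (v : Fin n → ℝ) :
    ∑ i, ∑ j, g y i j * v i * (∑ p, ∑ q, christoffel g j p q y * v p * v q) =
      (1 / 2) * ∑ k, ∑ i, ∑ j, pd k (fun x => g x i j) y * v k * v i * v j := by
  set P : Fin n → Fin n → Fin n → ℝ := fun k i j => pd k (fun x => g x i j) y
  have hlower : ∑ i, ∑ j, g y i j * v i * (∑ p, ∑ q, christoffel g j p q y * v p * v q) =
      ∑ i, ∑ p, ∑ q, v i * v p * v q * (∑ j, g y i j * christoffel g j p q y) := by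
    simp only [Finset.mul_sum]
    refine Finset.sum_congr rfl fun i _ => ?_
    rw [Finset.sum_comm]
    exact Finset.sum_congr rfl fun p _ => by
      rw [Finset.sum_comm]
      exact Finset.sum_congr rfl fun q _ => Finset.sum_congr rfl fun j _ => by ring
  have hT₁ : ∑ i, ∑ p, ∑ q, v i * v p * v q * P p q i =
      ∑ k, ∑ i, ∑ j, P k i j * v k * v i * v j := by
    rw [Finset.sum_comm]
    exact Finset.sum_congr rfl fun p _ => by
      rw [Finset.sum_comm]
      exact Finset.sum_congr rfl fun q _ => Finset.sum_congr rfl fun i _ => by ring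
  have hT₂ : ∑ i, ∑ p, ∑ q, v i * v p * v q * P q p i =
      ∑ k, ∑ i, ∑ j, P k i j * v k * v i * v j := by
    rw [Finset.sum_comm, Finset.sum_congr rfl fun p _ => Finset.sum_comm, Finset.sum_comm]
    exact Finset.sum_congr rfl fun q _ => Finset.sum_congr rfl fun p _ =>
      Finset.sum_congr rfl fun i _ => by ring
  have hT₃ : ∑ i, ∑ p, ∑ q, v i * v p * v q * P i p q =
      ∑ k, ∑ i, ∑ j, P k i j * v k * v i * v j :=
    Finset.sum_congr rfl fun i _ => Finset.sum_congr rfl fun p _ =>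
      Finset.sum_congr rfl fun q _ => by ring
  calc _ = ∑ i, ∑ p, ∑ q, v i * v p * v q * ((1 / 2) * (P p q i + P q p i - P i p q)) := by
        rw [hlower]
        simp only [sum_mul_christoffel hdet, P]
    _ = (1 / 2) * ((∑ i, ∑ p, ∑ q, v i * v p * v q * P p q i)
          + (∑ i, ∑ p, ∑ q, v i * v p * v q * P q p i)
          - ∑ i, ∑ p, ∑ q, v i * v p * v q * P i p q) := by
        simp only [Finset.mul_sum, ← Finset.sum_add_distrib, ← Finset.sum_sub_distrib]
        exact Finset.sum_congr rfl fun i _ => Finset.sum_congr rfl fun p _ =>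
          Finset.sum_congr rfl fun q _ => by ring
    _ = _ := by rw [hT₁, hT₂, hT₃]; ring

end Energy

namespace IsGeodesic

variable {n : ℕ} {g : (Fin n → ℝ) → Matrix (Fin n) (Fin n) ℝ} {w : ℝ → Fin n → ℝ}

theorem differentiable (hw : IsGeodesic g w) : Differentiable ℝ w :=
  (contDiff_pi.2 hw.1).differentiable two_ne_zero

theorem deriv_apply (hw : IsGeodesic g w) (t : ℝ) (i : Fin n) :
    deriv w t i = deriv (fun s => w s i) t := by
  rw [deriv_pi fun i => (hw.1 i).differentiable two_ne_zero t]

theorem hasDerivAt_deriv (hw : IsGeodesic g w) (t : ℝ) :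
    HasDerivAt (deriv w)
      (fun i => -∑ j, ∑ k, christoffel g i j k (w t) * deriv w t j * deriv w t k) t := by
  refine hasDerivAt_pi.2 fun i => ?_
  have hC1 : ContDiff ℝ 1 (deriv fun s => w s i) :=
    (contDiff_succ_iff_deriv.1 (hw.1 i)).2.2
  simp only [hw.deriv_apply, ← hw.2 t i]
  exact (hC1.differentiable one_ne_zero t).hasDerivAt

theorem energy_eq (hw : IsGeodesic g w) (hg : ∀ i j, ContDiff ℝ 1 fun x => g x i j)
    (hsymm : ∀ x, (g x).IsSymm) (hdet : ∀ x, IsUnit (g x).det) (t : ℝ) :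
    ∑ i, ∑ j, g (w t) i j * deriv w t i * deriv w t j =
      ∑ i, ∑ j, g (w 0) i j * deriv w 0 i * deriv w 0 j := by
  set E : ℝ → ℝ := fun τ => ∑ i, ∑ j, g (w τ) i j * deriv w τ i * deriv w τ j
  have hE : ∀ τ, HasDerivAt E 0 τ := by
    intro τ
    set u := deriv w τ
    set a : Fin n → ℝ := fun i => -∑ j, ∑ k, christoffel g i j k (w τ) * u j * u k
    have hu : HasDerivAt (fun s => deriv w s) a τ := hw.hasDerivAt_deriv τ
    have hwτ : HasDerivAt w u τ := (hw.differentiable τ).hasDerivAt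
    have hE' : HasDerivAt E (∑ i, ∑ j, (((∑ k, u k * pd k (fun x => g x i j) (w τ)) * u i
        + g (w τ) i j * a i) * u j + g (w τ) i j * u i * a j)) τ :=
      HasDerivAt.fun_sum fun i _ => HasDerivAt.fun_sum fun j _ =>
        ((hwτ.comp_sum_pd ((hg i j).differentiable one_ne_zero _)).mul
          (hasDerivAt_pi.1 hu i)).mul (hasDerivAt_pi.1 hu j)
    have hcross : ∑ i, ∑ j, g (w τ) i j * a i * u j = ∑ i, ∑ j, g (w τ) i j * u i * a j := by
      rw [Finset.sum_comm]
      exact Finset.sum_congr rfl fun i _ => Finset.sum_congr rfl fun j _ => by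
        rw [(hsymm (w τ)).apply i j]; ring
    have hcubic : ∑ i, ∑ j, (∑ k, u k * pd k (fun x => g x i j) (w τ)) * u i * u j =
        ∑ k, ∑ i, ∑ j, pd k (fun x => g x i j) (w τ) * u k * u i * u j := by
      simp only [Finset.sum_mul]
      rw [Finset.sum_congr rfl fun i _ => Finset.sum_comm, Finset.sum_comm]
      exact Finset.sum_congr rfl fun k _ => Finset.sum_congr rfl fun i _ =>
        Finset.sum_congr rfl fun j _ => by ring
    have hgeod : ∑ i, ∑ j, g (w τ) i j * u i * a j =
        -∑ i, ∑ j, g (w τ) i j * u i * ∑ p, ∑ q, christoffel g j p q (w τ) * u p * u q := by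
      simp only [a, mul_neg, Finset.sum_neg_distrib]
    convert hE' using 1
    simp only [add_mul, Finset.sum_add_distrib, hcross, hcubic, hgeod,
      sum_sum_mul_christoffel_contract (hdet (w τ))]
    ring
  exact is_const_of_deriv_eq_zero (fun τ => (hE τ).differentiableAt) (fun τ => (hE τ).deriv) t 0

end IsGeodesic

section TransverseVelocity

variable {n : ℕ} [NeZero n]

theorem abs_sum_sum_mul_mul_le_of_apply_zero_zero {Γ : Fin n → Fin n → ℝ} {C c : ℝ}
    {v : Fin n → ℝ} (hC : ∀ p q, |Γ p q| ≤ C) (h00 : Γ 0 0 = 0) (hv : ‖v‖ ≤ c) :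
    |∑ p, ∑ q, Γ p q * v p * v q| ≤ n ^ 2 * (C * c * ‖restr v‖) := by
  have hC0 : 0 ≤ C := (abs_nonneg _).trans (hC 0 0)
  have hc0 : 0 ≤ c := (norm_nonneg v).trans hv
  have hvc : ∀ i, |v i| ≤ c := fun i => (norm_le_pi_norm v i).trans hv
  have hvr : ∀ i, i ≠ 0 → |v i| ≤ ‖restr v‖ := fun i hi => norm_le_pi_norm (restr v) ⟨i, hi⟩
  have hterm : ∀ p q, |Γ p q * v p * v q| ≤ C * c * ‖restr v‖ := by
    intro p q
    rw [abs_mul, abs_mul]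
    by_cases hp : p = 0
    · by_cases hq : q = 0
      · subst hp hq
        simp only [h00, abs_zero, zero_mul]
        positivity
      · gcongr
        exacts [hC p q, hvc p, hvr q hq]
    · calc |Γ p q| * |v p| * |v q| ≤ C * ‖restr v‖ * c := by
            gcongr
            exacts [hC p q, hvr p hp, hvc q]
        _ = C * c * ‖restr v‖ := by ring
  calc |∑ p, ∑ q, Γ p q * v p * v q| ≤ ∑ p, ∑ q, |Γ p q * v p * v q| :=
        (Finset.abs_sum_le_sum_abs _ _).trans
          (Finset.sum_le_sum fun p _ => Finset.abs_sum_le_sum_abs _ _)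
    _ ≤ ∑ _p : Fin n, ∑ _q : Fin n, C * c * ‖restr v‖ :=
        Finset.sum_le_sum fun p _ => Finset.sum_le_sum fun q _ => hterm p q
    _ = n ^ 2 * (C * c * ‖restr v‖) := by
        simp only [Finset.sum_const, Finset.card_univ, Fintype.card_fin, nsmul_eq_mul]
        ring

variable {g : (Fin n → ℝ) → Matrix (Fin n) (Fin n) ℝ} {w : ℝ → Fin n → ℝ}

theorem IsGeodesic.norm_restr_deriv_le (hw : IsGeodesic g w) {C c : ℝ}
    (hC : ∀ i j k x, |christoffel g i j k x| ≤ C) (h00 : ∀ k x, christoffel g k 0 0 x = 0)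
    (hc : ∀ t, ‖deriv w t‖ ≤ c) {t : ℝ} (ht : 0 ≤ t) :
    ‖restr (deriv w t)‖ ≤ ‖restr (deriv w 0)‖ * exp (n ^ 2 * C * c * t) := by
  set a : ℝ → Fin n → ℝ := fun τ i =>
    -∑ j, ∑ k, christoffel g i j k (w τ) * deriv w τ j * deriv w τ k
  have hF : ∀ τ, HasDerivAt (fun τ => restr (deriv w τ)) (restr (a τ)) τ := fun τ =>
    hasDerivAt_pi.2 fun i => hasDerivAt_pi.1 (hw.hasDerivAt_deriv τ) i
  have hbound : ∀ τ, ‖restr (a τ)‖ ≤ n ^ 2 * C * c * ‖restr (deriv w τ)‖ := by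
    intro τ
    have hC0 : 0 ≤ C := (abs_nonneg _).trans (hC 0 0 0 0)
    have hc0 : 0 ≤ c := (norm_nonneg _).trans (hc 0)
    refine (pi_norm_le_iff_of_nonneg (by positivity)).2 fun i => ?_
    rw [Real.norm_eq_abs, restr, abs_neg, mul_assoc, mul_assoc, ← mul_assoc C]
    exact abs_sum_sum_mul_mul_le_of_apply_zero_zero (fun p q => hC i p q (w τ)) (h00 i (w τ))
      (hc τ)
  have h := norm_le_gronwallBound_of_norm_deriv_right_le (ε := 0)
    (fun τ _ => (hF τ).continuousAt.continuousWithinAt) (fun τ _ => (hF τ).hasDerivWithinAt)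
    le_rfl (fun τ _ => by rw [add_zero]; exact hbound τ) t ⟨ht, le_rfl⟩
  rwa [sub_zero, gronwallBound_ε0] at h

end TransverseVelocity

theorem IsGeodesicFlow.abs_normg_mul_zdot_le {n : ℕ} [NeZero n]
    {g : (Fin n → ℝ) → Matrix (Fin n) (Fin n) ℝ} {z : (Fin n → ℝ) → (Fin n → ℝ) → ℝ → Fin n → ℝ}
    (hz : IsGeodesicFlow g z) (hg : ∀ i j, ContDiff ℝ 1 fun x => g x i j)
    (hpos : ∀ x, (g x).PosDef) {C c : ℝ} (hC : ∀ i j k x, |christoffel g i j k x| ≤ C)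
    (h00 : ∀ k x, christoffel g k 0 0 x = 0) (hc : ∀ x v, ‖v‖ ≤ c * normg g x v)
    (x ξ : Fin n → ℝ) {t : ℝ} (ht : 0 ≤ t) {k : Fin n} (hk : k ≠ 0) :
    |normg g x ξ * zdot z x ((normg g x ξ)⁻¹ • ξ) t k| ≤ ‖restr ξ‖ * exp (n ^ 2 * C * c * t) := by
  rcases eq_or_ne ξ 0 with rfl | hξ
  · simp only [normg, Pi.zero_apply, mul_zero, Finset.sum_const_zero, Real.sqrt_zero, zero_mul,
      abs_zero]
    positivity
  set m := normg g x ξ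
  have hm : 0 < m := normg_pos (hpos x) hξ
  obtain ⟨⟨hw, hw0, hw'⟩, -⟩ := hz x (m⁻¹ • ξ) (smul_ne_zero (inv_ne_zero hm.ne') hξ)
  set w := z x (m⁻¹ • ξ)
  have hv0 : deriv w 0 = m⁻¹ • ξ := funext fun i => (hw.deriv_apply 0 i).trans (hw' i)
  have hsymm : ∀ x, (g x).IsSymm := fun x => Matrix.isHermitian_iff_isSymm.1 (hpos x).1
  have hdet : ∀ x, IsUnit (g x).det := fun x => isUnit_iff_ne_zero.2 (hpos x).det_pos.ne'
  have hunit : ∀ τ, normg g (w τ) (deriv w τ) = 1 := fun τ => by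
    rw [normg, hw.energy_eq hg hsymm hdet τ, ← normg, hw0, hv0, normg_smul, abs_inv,
      abs_of_pos hm, inv_mul_cancel₀ hm.ne']
  have hvel : ∀ τ, ‖deriv w τ‖ ≤ c := fun τ => by simpa [hunit τ] using hc (w τ) (deriv w τ)
  calc |m * zdot z x (m⁻¹ • ξ) t k| = m * |deriv w t k| := by
        rw [zdot, ← hw.deriv_apply, abs_mul, abs_of_pos hm]
    _ ≤ m * ‖restr (deriv w t)‖ := by
        gcongr
        exact norm_le_pi_norm (restr (deriv w t)) ⟨k, hk⟩
    _ ≤ m * (‖restr (deriv w 0)‖ * exp (n ^ 2 * C * c * t)) := by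
        gcongr
        exact hw.norm_restr_deriv_le hC h00 hvel ht
    _ = ‖restr ξ‖ * exp (n ^ 2 * C * c * t) := by
        rw [hv0, show restr (m⁻¹ • ξ) = m⁻¹ • restr ξ from rfl, norm_smul, Real.norm_eq_abs,
          abs_inv, abs_of_pos hm]
        field_simp

theorem stmt_13_general (n : ℕ) [NeZero n]
    (g : (Fin n → ℝ) → Matrix (Fin n) (Fin n) ℝ)
    (hg_smooth : ∀ i j : Fin n, ContDiff ℝ 6 fun x => g x i j)
    (hg_pos : ∀ x, (g x).PosDef)
    (hg_eucl : ∃ R : ℝ, ∀ x : Fin n → ℝ, R < eunorm x → g x = 1)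
    (hg_semi : ∀ x : Fin n → ℝ, g x 0 0 = 1 ∧ ∀ i : Fin n, i ≠ 0 → g x 0 i = 0)
    (z : (Fin n → ℝ) → (Fin n → ℝ) → ℝ → Fin n → ℝ)
    (hz : IsGeodesicFlow g z)
    (D : Set (Fin n → ℝ))
    (G' : Set ({i : Fin n // i ≠ 0} → ℝ))
    (hGp_bdd : Bornology.IsBounded G')
    (G : Set (Fin n → ℝ)) (hG : G = {ξ : Fin n → ℝ | restr ξ ∈ G'})
    (d0 : ℝ) :
    ∃ K₁ : ℝ, 0 < K₁ ∧ ∀ x ∈ D, ∀ ξ ∈ G, ∀ t ∈ Set.Icc (0:ℝ) d0, ∀ k : Fin n, k ≠ 0 →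
      |normg g x ξ * zdot z x ((normg g x ξ)⁻¹ • ξ) t k| ≤ K₁ := by
  obtain ⟨R, hR⟩ := hg_eucl
  have hg : ∀ i j, ContDiff ℝ 1 fun x => g x i j := fun i j => (hg_smooth i j).of_le (by norm_num)
  have hgK : ∀ x ∉ Metric.closedBall 0 R, g x = 1 := fun x hx =>
    hR x ((not_le.1 (mem_closedBall_zero_iff.not.1 hx)).trans_le (norm_le_eunorm x))
  have hdet : ∀ x, IsUnit (g x).det := fun x => isUnit_iff_ne_zero.2 (hg_pos x).det_pos.ne'
  obtain ⟨C, hC⟩ := exists_abs_christoffel_le hg hdet (isCompact_closedBall 0 R) hgK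
  obtain ⟨c, hc0, hc⟩ := exists_norm_le_mul_normg
    (continuous_pi fun i => continuous_pi fun j => (hg i j).continuous) hg_pos
    (isCompact_closedBall 0 R) hgK
  obtain ⟨B, hB⟩ := isBounded_iff_forall_norm_le.1 hGp_bdd
  have hC0 : 0 ≤ C := (abs_nonneg _).trans (hC 0 0 0 0)
  refine ⟨max B 1 * exp (n ^ 2 * C * c * d0), by positivity, fun x _ ξ hξ t ht k hk => ?_⟩
  calc _ ≤ ‖restr ξ‖ * exp (n ^ 2 * C * c * t) :=
        hz.abs_normg_mul_zdot_le hg hg_pos hC (christoffel_zero_zero_of_semigeodesic hg_semi) hc x ξ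
          ht.1 hk
    _ ≤ max B 1 * exp (n ^ 2 * C * c * d0) := by
        gcongr
        · exact (hB _ (by rwa [hG] at hξ)).trans (le_max_left _ _)
        · exact ht.2

/-- **inequality (A.3).** There is a constant `K₁ > 0`, independent of
`(x,ξ) ∈ D × G` and `t ∈ [0,d₀]`, with `||ξ|_g ż^k(x, ξ/|ξ|_g, t)| ≤ K₁` for
`2 ≤ k ≤ n`, where `d₀` is the diameter of `D` in the metric `g`. -/
theorem stmt_13 (n : ℕ) (hn : 2 ≤ n) [NeZero n]
    (g : (Fin n → ℝ) → Matrix (Fin n) (Fin n) ℝ)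
    (hg_smooth : ∀ i j : Fin n, ContDiff ℝ 6 fun x => g x i j)
    (hg_symm : ∀ x, (g x).IsSymm)
    (hg_pos : ∀ x, (g x).PosDef)
    (hg_eucl : ∃ R : ℝ, ∀ x : Fin n → ℝ, R < eunorm x → g x = 1)
    (hg_semi : ∀ x : Fin n → ℝ, g x 0 0 = 1 ∧ ∀ i : Fin n, i ≠ 0 → g x 0 i = 0)
    (z : (Fin n → ℝ) → (Fin n → ℝ) → ℝ → Fin n → ℝ)
    (hz : IsGeodesicFlow g z)
    (D : Set (Fin n → ℝ))
    (hD_closed : IsClosed D) (hD_bdd : Bornology.IsBounded D)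
    (hD_sc : SimplyConnectedSpace D)
    (hD_conv : StronglyConvexIn g D)
    (G' : Set ({i : Fin n // i ≠ 0} → ℝ))
    (hGp_closed : IsClosed G') (hGp_bdd : Bornology.IsBounded G')
    (hGp_ne : (0 : {i : Fin n // i ≠ 0} → ℝ) ∉ G')
    (G : Set (Fin n → ℝ)) (hG : G = {ξ : Fin n → ℝ | restr ξ ∈ G'})
    (d0 : ℝ)
    (hd0_ub : ∀ x ∈ D, ∀ y ∈ D, ∀ γ T, UnitSpeedGeodesicIn g D x y γ T → T ≤ d0)
    (hd0_lub : ∀ d' : ℝ,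
      (∀ x ∈ D, ∀ y ∈ D, ∀ γ T, UnitSpeedGeodesicIn g D x y γ T → T ≤ d') → d0 ≤ d') :
    ∃ K₁ : ℝ, 0 < K₁ ∧ ∀ x ∈ D, ∀ ξ ∈ G, ∀ t ∈ Set.Icc (0:ℝ) d0, ∀ k : Fin n, k ≠ 0 →
      |normg g x ξ * zdot z x ((normg g x ξ)⁻¹ • ξ) t k| ≤ K₁ :=
  stmt_13_general n g hg_smooth hg_pos hg_eucl hg_semi z hz D G' hGp_bdd G hG d0
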